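/- arXiv:2507.00561 — 2 statements merged into one kernel-verified Lean document; each statement's English description precedes it below -/
import Mathlib

section
/- Let H be a real Hilbert space, V ⊆ H a nonempty closed convex subset, F : H × H → ℝ a bounded bilinear form that is coercive with constant α > 0 (i.e., F(v,v) ≥ α‖v‖² for all v ∈ H), and r₁, r₂ ∈ H. Then for each i ∈ {1,2} the variational inequality F(u, v − u) ≥ ⟨rᵢ, v − u⟩ for all v ∈ V admits a unique solution uᵢ ∈ V, and moreover ‖u₁ − u₂‖ ≤ (1/α)‖r₁ − r₂‖. -/
set_option maxHeartbeats 1000000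

open scoped RealInnerProductSpace

section aux

variable {H : Type*} [NormedAddCommGroup H] [InnerProductSpace ℝ H] [CompleteSpace H]

/-- Projection onto a nonempty closed convex set: existence + variational characterization. -/
lemma LS_exists_proj (V : Set H) (hV : V.Nonempty) (hVc : IsClosed V) (hVconv : Convex ℝ V)
    (x : H) : ∃ p ∈ V, ∀ w ∈ V, ⟪x - p, w - p⟫ ≤ 0 := by
  obtain ⟨p, hp, hmin⟩ := exists_norm_eq_iInf_of_complete_convex hV
    (hVc.isComplete) hVconv x
  exact ⟨p, hp, (norm_eq_iInf_iff_real_inner_le_zero hVconv hp).1 hmin⟩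

/-- Existence of a solution to the variational inequality. -/
lemma LS_exists (V : Set H) (hV : V.Nonempty) (hVc : IsClosed V) (hVconv : Convex ℝ V)
    (F : H →L[ℝ] H →L[ℝ] ℝ) (α : ℝ) (hα : 0 < α)
    (hcoer : ∀ v : H, α * ‖v‖ ^ 2 ≤ F v v) (r : H) :
    ∃ u ∈ V, ∀ v ∈ V, ⟪r, v - u⟫ ≤ F u (v - u) := by
  classical
  -- the operator A with ⟪A u, v⟫ = F u v
  set A : H → H := fun u => (InnerProductSpace.toDual ℝ H).symm (F u) with hA
  have hAinner : ∀ u v : H, ⟪A u, v⟫ = F u v := by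
    intro u v; simp [hA, InnerProductSpace.toDual_symm_apply]
  have hAsub : ∀ u w : H, A (u - w) = A u - A w := by
    intro u w; simp [hA, map_sub]
  have hAnorm : ∀ u : H, ‖A u‖ ≤ ‖F‖ * ‖u‖ := by
    intro u
    have : ‖A u‖ = ‖F u‖ := (InnerProductSpace.toDual ℝ H).symm.norm_map _
    rw [this]; exact F.le_opNorm u
  set M : ℝ := max ‖F‖ α with hM
  have hM0 : 0 < M := lt_of_lt_of_le hα (le_max_right _ _)
  have hAnorm' : ∀ u : H, ‖A u‖ ≤ M * ‖u‖ := fun u =>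
    (hAnorm u).trans (by gcongr; exact le_max_left _ _)
  have hαM : α ≤ M := le_max_right _ _
  set ρ : ℝ := α / M ^ 2 with hρ
  have hρ0 : 0 < ρ := div_pos hα (by positivity)
  set k : ℝ := Real.sqrt (1 - α ^ 2 / M ^ 2) with hk
  have hfrac : α ^ 2 / M ^ 2 ≤ 1 := by
    rw [div_le_one (by positivity)]; nlinarith
  have hfrac0 : 0 < α ^ 2 / M ^ 2 := by positivity
  have hk1 : k < 1 := by
    have := Real.sqrt_lt_sqrt (by linarith : (0:ℝ) ≤ 1 - α ^ 2 / M ^ 2)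
      (show 1 - α ^ 2 / M ^ 2 < 1 by linarith)
    simpa [hk] using this
  have hk0 : 0 ≤ k := Real.sqrt_nonneg _
  -- key contraction estimate
  have hcontr : ∀ z : H, ‖z - ρ • A z‖ ≤ k * ‖z‖ := by
    intro z
    have h1 : ‖z - ρ • A z‖ ^ 2 = ‖z‖ ^ 2 - 2 * ρ * ⟪A z, z⟫ + ρ ^ 2 * ‖A z‖ ^ 2 := by
      rw [norm_sub_sq_real, norm_smul, real_inner_smul_right, real_inner_comm]
      simp [abs_of_pos hρ0]; ring
    have h2 : α * ‖z‖ ^ 2 ≤ ⟪A z, z⟫ := by rw [hAinner]; exact hcoer z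
    have h3 : ‖A z‖ ^ 2 ≤ M ^ 2 * ‖z‖ ^ 2 := by
      have := hAnorm' z
      nlinarith [norm_nonneg (A z), norm_nonneg z]
    have h4 : ‖z - ρ • A z‖ ^ 2 ≤ k ^ 2 * ‖z‖ ^ 2 := by
      have hksq : k ^ 2 = 1 - α ^ 2 / M ^ 2 := Real.sq_sqrt (by linarith)
      have e1 : 2 * ρ * (α * ‖z‖ ^ 2) ≤ 2 * ρ * ⟪A z, z⟫ :=
        mul_le_mul_of_nonneg_left h2 (by positivity)
      have e2 : ρ ^ 2 * ‖A z‖ ^ 2 ≤ ρ ^ 2 * (M ^ 2 * ‖z‖ ^ 2) :=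
        mul_le_mul_of_nonneg_left h3 (by positivity)
      have ecoef : 1 - 2 * ρ * α + ρ ^ 2 * M ^ 2 = 1 - α ^ 2 / M ^ 2 := by
        rw [hρ]; field_simp; ring
      rw [h1, hksq, ← ecoef]
      nlinarith [e1, e2]
    calc ‖z - ρ • A z‖ = Real.sqrt (‖z - ρ • A z‖ ^ 2) := by
          rw [Real.sqrt_sq (norm_nonneg _)]
      _ ≤ Real.sqrt (k ^ 2 * ‖z‖ ^ 2) := Real.sqrt_le_sqrt h4
      _ = k * ‖z‖ := by
          rw [Real.sqrt_mul (sq_nonneg k), Real.sqrt_sq hk0, Real.sqrt_sq (norm_nonneg _)]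
  -- the projection map
  have hproj := LS_exists_proj V hV hVc hVconv
  choose P hPmem hPchar using hproj
  -- P is nonexpansive
  have hPnonexp : ∀ x y : H, ‖P x - P y‖ ≤ ‖x - y‖ := by
    intro x y
    have h1 := hPchar x (P y) (hPmem y)
    have h2 := hPchar y (P x) (hPmem x)
    have key : ‖P x - P y‖ ^ 2 ≤ ⟪x - y, P x - P y⟫ := by
      have e1 : ⟪x - P x, P y - P x⟫ ≤ 0 := h1
      have e2 : ⟪y - P y, P x - P y⟫ ≤ 0 := h2
      have e3 : ⟪x - y, P x - P y⟫ - ‖P x - P y‖ ^ 2 ≥ 0 := by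
        have : ⟪x - P x, P y - P x⟫ + ⟪y - P y, P x - P y⟫
            = -(⟪x - y, P x - P y⟫ - ‖P x - P y‖ ^ 2) := by
          rw [show (x - P x : H) = (x - y) + (y - P y) - (P x - P y) by abel,
            show (P y - P x : H) = -(P x - P y) by abel]
          rw [inner_neg_right, inner_sub_left, inner_add_left, real_inner_self_eq_norm_sq]
          ring
        linarith
      linarith
    have := le_trans key (real_inner_le_norm _ _)
    rcases eq_or_lt_of_le (norm_nonneg (P x - P y)) with h | h
    · rw [← h]; exact norm_nonneg _
    · nlinarith
  -- the contraction T on the subtype V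
  letI : Nonempty V := hV.to_subtype
  haveI : CompleteSpace V := hVc.completeSpace_coe
  set T : V → V := fun u => ⟨P ((u : H) - ρ • A u + ρ • r), hPmem _⟩ with hT
  have hTcontr : ContractingWith (⟨k, hk0⟩ : NNReal) T := by
    refine ⟨by exact_mod_cast hk1, LipschitzWith.of_dist_le_mul fun u w => ?_⟩
    show dist (T u) (T w) ≤ k * dist u w
    have h1 : dist (T u) (T w) = ‖P ((u:H) - ρ • A u + ρ • r) - P ((w:H) - ρ • A w + ρ • r)‖ := by
      simp [hT, Subtype.dist_eq, dist_eq_norm]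
    have h2 : ((u:H) - ρ • A u + ρ • r) - ((w:H) - ρ • A w + ρ • r)
        = ((u:H) - w) - ρ • A ((u:H) - w) := by
      rw [hAsub]; rw [smul_sub]; abel
    calc dist (T u) (T w) ≤ ‖((u:H) - ρ • A u + ρ • r) - ((w:H) - ρ • A w + ρ • r)‖ := by
          rw [h1]; exact hPnonexp _ _
      _ = ‖((u:H) - w) - ρ • A ((u:H) - w)‖ := by rw [h2]
      _ ≤ k * ‖(u:H) - w‖ := hcontr _
      _ = k * dist u w := by rw [Subtype.dist_eq, dist_eq_norm]
  set u : V := hTcontr.fixedPoint T with hu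
  have hufix : T u = u := hTcontr.fixedPoint_isFixedPt
  refine ⟨(u : H), u.2, ?_⟩
  intro v hv
  -- the projection characterization at the fixed point
  have hchar := hPchar ((u : H) - ρ • A u + ρ • r) v hv
  have hPu : P ((u : H) - ρ • A u + ρ • r) = (u : H) := by
    have := congrArg (Subtype.val : V → H) hufix
    simpa [hT] using this
  rw [hPu] at hchar
  have hsimp : ((u:H) - ρ • A u + ρ • r) - (u:H) = ρ • (r - A u) := by
    rw [smul_sub]; abel
  rw [hsimp] at hchar
  rw [real_inner_smul_left, inner_sub_left] at hchar
  have : ⟪r, v - (u:H)⟫ - ⟪A u, v - (u:H)⟫ ≤ 0 := by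
    rcases mul_nonpos_iff.1 hchar with ⟨h1, h2⟩ | ⟨h1, h2⟩
    · linarith
    · linarith
  have hiff := hAinner (u:H) (v - (u:H))
  linarith

end aux

lemma LS_unique {H : Type*} [NormedAddCommGroup H] [InnerProductSpace ℝ H]
    (V : Set H) (F : H →L[ℝ] H →L[ℝ] ℝ) (α : ℝ) (hα : 0 < α)
    (hcoer : ∀ v : H, α * ‖v‖ ^ 2 ≤ F v v) (r : H) {u u' : H}
    (hu : u ∈ V ∧ ∀ v ∈ V, ⟪r, v - u⟫ ≤ F u (v - u))
    (hu' : u' ∈ V ∧ ∀ v ∈ V, ⟪r, v - u'⟫ ≤ F u' (v - u')) : u = u' := by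
  have h1 := hu.2 u' hu'.1
  have h2 := hu'.2 u hu.1
  have hbil : F (u - u') (u - u') = F u (u - u') - F u' (u - u') := by
    rw [map_sub]; simp; ring
  have hflip : F u (u' - u) = - F u (u - u') := by
    rw [show (u' - u : H) = -(u - u') by abel]; simp
  have hip : ⟪r, u' - u⟫ = - ⟪r, u - u'⟫ := by
    rw [show (u' - u : H) = -(u - u') by abel, inner_neg_right]
  have hcz : α * ‖u - u'‖ ^ 2 ≤ 0 := by
    have := hcoer (u - u')
    rw [hbil] at this
    rw [hflip, hip] at h1
    linarith
  have hz : ‖u - u'‖ = 0 := by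
    by_contra hne
    have hpos : 0 < ‖u - u'‖ := lt_of_le_of_ne (norm_nonneg _) (Ne.symm hne)
    nlinarith [mul_pos (mul_pos hα hpos) hpos]
  exact sub_eq_zero.1 (norm_eq_zero.1 hz)

/-- Lions–Stampacchia: unique solutions of variational inequalities and the
sensitivity estimate. -/
theorem stmt_0 {H : Type*} [NormedAddCommGroup H] [InnerProductSpace ℝ H] [CompleteSpace H]
    (V : Set H) (hV : V.Nonempty) (hVc : IsClosed V) (hVconv : Convex ℝ V)
    (F : H →L[ℝ] H →L[ℝ] ℝ) (α : ℝ) (hα : 0 < α)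
    (hcoer : ∀ v : H, α * ‖v‖ ^ 2 ≤ F v v) (r₁ r₂ : H) :
    ∃ u₁ u₂ : H,
      (u₁ ∈ V ∧ ∀ v ∈ V, ⟪r₁, v - u₁⟫ ≤ F u₁ (v - u₁)) ∧
      (u₂ ∈ V ∧ ∀ v ∈ V, ⟪r₂, v - u₂⟫ ≤ F u₂ (v - u₂)) ∧
      (∀ u : H, (u ∈ V ∧ ∀ v ∈ V, ⟪r₁, v - u⟫ ≤ F u (v - u)) → u = u₁) ∧
      (∀ u : H, (u ∈ V ∧ ∀ v ∈ V, ⟪r₂, v - u⟫ ≤ F u (v - u)) → u = u₂) ∧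
      ‖u₁ - u₂‖ ≤ (1 / α) * ‖r₁ - r₂‖ := by
  obtain ⟨u₁, hu₁, hvi₁⟩ := LS_exists V hV hVc hVconv F α hα hcoer r₁
  obtain ⟨u₂, hu₂, hvi₂⟩ := LS_exists V hV hVc hVconv F α hα hcoer r₂
  refine ⟨u₁, u₂, ⟨hu₁, hvi₁⟩, ⟨hu₂, hvi₂⟩,
    fun u hu => LS_unique V F α hα hcoer r₁ hu ⟨hu₁, hvi₁⟩,
    fun u hu => LS_unique V F α hα hcoer r₂ hu ⟨hu₂, hvi₂⟩, ?_⟩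
  have h1 := hvi₁ u₂ hu₂
  have h2 := hvi₂ u₁ hu₁
  have hbil : F (u₁ - u₂) (u₁ - u₂) = F u₁ (u₁ - u₂) - F u₂ (u₁ - u₂) := by
    rw [map_sub]; simp; ring
  have hflip : F u₁ (u₂ - u₁) = - F u₁ (u₁ - u₂) := by
    rw [show (u₂ - u₁ : H) = -(u₁ - u₂) by abel]; simp
  have hkey : α * ‖u₁ - u₂‖ ^ 2 ≤ ⟪r₁ - r₂, u₁ - u₂⟫ := by
    have hc := hcoer (u₁ - u₂)
    rw [hbil] at hc
    rw [hflip] at h1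
    have hip1 : ⟪r₁, u₂ - u₁⟫ = - ⟪r₁, u₁ - u₂⟫ := by
      rw [show (u₂ - u₁ : H) = -(u₁ - u₂) by abel, inner_neg_right]
    rw [hip1] at h1
    have hsub : ⟪r₁ - r₂, u₁ - u₂⟫ = ⟪r₁, u₁ - u₂⟫ - ⟪r₂, u₁ - u₂⟫ := inner_sub_left _ _ _
    linarith
  have hcs : ⟪r₁ - r₂, u₁ - u₂⟫ ≤ ‖r₁ - r₂‖ * ‖u₁ - u₂‖ := real_inner_le_norm _ _
  rcases eq_or_lt_of_le (norm_nonneg (u₁ - u₂)) with h | h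
  · rw [← h]; positivity
  · rw [div_mul_eq_mul_div, one_mul, le_div_iff₀ hα]
    nlinarith
end

section
/- Let H be a real Hilbert space and X ⊆ H nonempty, bounded, closed, convex. Let P : X → X be nonexpansive, i.e., ‖P(u) − P(v)‖ ≤ ‖u − v‖ for all u, v ∈ X. Then P admits at least one fixed point in X. If moreover P is a strict contraction (Lipschitz constant < 1), the fixed point is unique. -/
/-!
For `t < 1` the map `u ↦ (1 - t) • x₀ + t • P u` is a contraction of `X`; its fixed point `q`
satisfies `‖q - P q‖ = (1 - t) * ‖x₀ - P q‖`, so letting `t → 1` yields approximate fixed points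
`x n` with `x n - P (x n) → 0`. Along an ultrafilter they converge weakly to some `w`
(Banach–Alaoglu in the dual, then Riesz). Comparing with the nearest point of `X` to `w` shows
`w ∈ X`. Finally `‖x n - P w‖² = ‖x n - w‖² + 2⟪x n - w, w - P w⟫ + ‖w - P w‖²`, while
nonexpansiveness gives `‖x n - P w‖ ≤ ‖x n - P (x n)‖ + ‖x n - w‖`; in the limit `‖w - P w‖² ≤ 0`.
-/

open Filter Topology Set Function
open scoped InnerProductSpace

section Normed

variable {E : Type*} [NormedAddCommGroup E] [NormedSpace ℝ E] {X : Set E} {P : E → E}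

theorem LipschitzOnWith.exists_mem_eq_smul_add_smul (hP : LipschitzOnWith 1 P X)
    (hX : IsComplete X) (hconv : Convex ℝ X) (hmaps : MapsTo P X X)
    {x₀ : E} (hx₀ : x₀ ∈ X) {t : ℝ} (ht₀ : 0 ≤ t) (ht₁ : t < 1) :
    ∃ q ∈ X, q = (1 - t) • x₀ + t • P q := by
  set g : E → E := fun u => (1 - t) • x₀ + t • P u
  have hg : MapsTo g X X := fun u hu => hconv hx₀ (hmaps hu) (by linarith) ht₀ (by ring)
  have hgLip : LipschitzOnWith (Real.toNNReal t) g X := by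
    refine LipschitzOnWith.of_dist_le' fun u hu v hv => ?_
    calc dist (g u) (g v) = t * ‖P u - P v‖ := by
          simp [g, dist_eq_norm, ← smul_sub, norm_smul, abs_of_nonneg ht₀]
      _ ≤ t * dist u v := by
          gcongr
          simpa [dist_eq_norm] using hP.norm_sub_le hu hv
  obtain ⟨q, hqX, hq, -⟩ := ContractingWith.exists_fixedPoint' hX hg
    ⟨Real.toNNReal_lt_one.2 ht₁, hgLip.mapsToRestrict hg⟩ hx₀ (edist_ne_top _ _)
  exact ⟨q, hqX, hq.symm⟩

theorem LipschitzOnWith.exists_seq_tendsto_sub_apply_zero (hP : LipschitzOnWith 1 P X)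
    (hX : IsComplete X) (hconv : Convex ℝ X) (hbdd : Bornology.IsBounded X) (hne : X.Nonempty)
    (hmaps : MapsTo P X X) :
    ∃ x : ℕ → E, (∀ n, x n ∈ X) ∧ Tendsto (fun n => x n - P (x n)) atTop (𝓝 0) := by
  obtain ⟨x₀, hx₀⟩ := hne
  obtain ⟨D, hD⟩ := hbdd.subset_closedBall x₀
  have hq : ∀ n : ℕ, ∃ q ∈ X, ‖q - P q‖ ≤ 1 / (n + 1) * D := by
    intro n
    obtain ⟨q, hqX, hq⟩ := hP.exists_mem_eq_smul_add_smul hX hconv hmaps hx₀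
      (t := n / (n + 1)) (by positivity) ((div_lt_one (by positivity)).2 (by linarith))
    refine ⟨q, hqX, ?_⟩
    have hsub : q - P q = (1 / (n + 1) : ℝ) • (x₀ - P q) := by
      have h1t : 1 - (n : ℝ) / (n + 1) = 1 / (n + 1) := by field_simp; ring
      nth_rewrite 1 [hq]
      rw [← h1t]
      module
    rw [hsub, norm_smul, Real.norm_of_nonneg (by positivity)]
    gcongr
    simpa [dist_eq_norm'] using hD (hmaps hqX)
  choose x hxX hx using hq
  refine ⟨x, hxX, squeeze_zero_norm hx ?_⟩
  simpa using tendsto_one_div_add_atTop_nhds_zero_nat.mul_const D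

end Normed

section Hilbert

variable {H : Type*} [NormedAddCommGroup H] [InnerProductSpace ℝ H] {ι : Type*}

theorem exists_tendsto_inner_of_norm_le [CompleteSpace H] (U : Ultrafilter ι) {x : ι → H}
    {R : ℝ} (hR : ∀ i, ‖x i‖ ≤ R) :
    ∃ w : H, ∀ y, Tendsto (fun i => ⟪x i, y⟫_ℝ) U (𝓝 ⟪w, y⟫_ℝ) := by
  set f : ι → WeakDual ℝ H := fun i => StrongDual.toWeakDual (InnerProductSpace.toDual ℝ H (x i))
  obtain ⟨ℓ, -, hℓ⟩ := (WeakDual.isCompact_closedBall 0 R).ultrafilter_le_nhds (U.map f) (by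
    rw [Ultrafilter.coe_map, le_principal_iff]
    exact mem_map.2 (univ_mem' fun i => by simpa [f] using hR i))
  refine ⟨(InnerProductSpace.toDual ℝ H).symm (WeakDual.toStrongDual ℓ), fun y => ?_⟩
  rw [InnerProductSpace.toDual_symm_apply]
  exact ((WeakDual.eval_continuous y).tendsto ℓ).comp hℓ

theorem IsClosed.mem_of_tendsto_inner [CompleteSpace H] {X : Set H} (hX : IsClosed X)
    (hconv : Convex ℝ X) {l : Filter ι} [l.NeBot] {x : ι → H} (hx : ∀ᶠ i in l, x i ∈ X)
    {w : H} (hw : ∀ y, Tendsto (fun i => ⟪x i, y⟫_ℝ) l (𝓝 ⟪w, y⟫_ℝ)) : w ∈ X := by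
  obtain ⟨i₀, hi₀⟩ := hx.exists
  obtain ⟨z, hzX, hz⟩ := exists_norm_eq_iInf_of_complete_convex ⟨x i₀, hi₀⟩ hX.isComplete hconv w
  have hproj := (norm_eq_iInf_iff_real_inner_le_zero hconv hzX).1 hz
  have hlim : Tendsto (fun i => ⟪x i - z, w - z⟫_ℝ) l (𝓝 ⟪w - z, w - z⟫_ℝ) := by
    simpa only [← inner_sub_left] using (hw (w - z)).sub_const ⟪z, w - z⟫_ℝ
  have hwz := le_of_tendsto hlim (hx.mono fun i hi => real_inner_comm (x i - z) _ ▸ hproj _ hi)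
  rw [real_inner_self_nonpos, sub_eq_zero] at hwz
  exact hwz ▸ hzX

theorem LipschitzOnWith.isFixedPt_of_tendsto_inner {X : Set H} {P : H → H}
    (hP : LipschitzOnWith 1 P X) {l : Filter ι} [l.NeBot] {x : ι → H} (hx : ∀ᶠ i in l, x i ∈ X)
    {R : ℝ} (hR : ∀ i, ‖x i‖ ≤ R) (hxP : Tendsto (fun i => x i - P (x i)) l (𝓝 0))
    {w : H} (hwX : w ∈ X) (hw : ∀ y, Tendsto (fun i => ⟪x i, y⟫_ℝ) l (𝓝 ⟪w, y⟫_ℝ)) :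
    IsFixedPt P w := by
  set d := w - P w
  set e := fun i => ‖x i - P (x i)‖
  have key : ∀ i, x i ∈ X →
      ‖d‖ ^ 2 + 2 * ⟪x i - w, d⟫_ℝ ≤ e i * (2 * (R + ‖w‖) + e i) := by
    intro i hi
    have hPw : ‖x i - P w‖ ≤ e i + ‖x i - w‖ :=
      calc ‖x i - P w‖ ≤ e i + ‖P (x i) - P w‖ := norm_sub_le_norm_sub_add_norm_sub _ _ _
        _ ≤ e i + ‖x i - w‖ := add_le_add le_rfl (by simpa using hP.norm_sub_le hi hwX)
    have hexp : ‖x i - P w‖ ^ 2 = ‖x i - w‖ ^ 2 + 2 * ⟪x i - w, d⟫_ℝ + ‖d‖ ^ 2 := by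
      rw [← norm_add_sq_real, sub_add_sub_cancel]
    have hxw : ‖x i - w‖ ≤ R + ‖w‖ := (_root_.norm_sub_le _ _).trans (by linarith [hR i])
    nlinarith [norm_nonneg (x i - P w), norm_nonneg (x i - w), norm_nonneg (x i - P (x i))]
  have hL : Tendsto (fun i => ‖d‖ ^ 2 + 2 * ⟪x i - w, d⟫_ℝ) l (𝓝 (‖d‖ ^ 2)) := by
    have := ((hw d).sub_const ⟪w, d⟫_ℝ).const_mul 2 |>.const_add (‖d‖ ^ 2)
    simpa [inner_sub_left] using this
  have he : Tendsto e l (𝓝 0) := by simpa using hxP.norm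
  have hRhs : Tendsto (fun i => e i * (2 * (R + ‖w‖) + e i)) l (𝓝 0) := by
    simpa using he.mul (he.const_add (2 * (R + ‖w‖)))
  have hd : ‖d‖ ^ 2 ≤ 0 := le_of_tendsto_of_tendsto hL hRhs (hx.mono key)
  have : d = 0 := by simpa using hd
  exact (sub_eq_zero.1 this).symm

theorem LipschitzOnWith.exists_isFixedPt [CompleteSpace H] {X : Set H} {P : H → H}
    (hP : LipschitzOnWith 1 P X) (hne : X.Nonempty) (hbdd : Bornology.IsBounded X)
    (hX : IsClosed X) (hconv : Convex ℝ X) (hmaps : MapsTo P X X) :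
    ∃ w ∈ X, IsFixedPt P w := by
  obtain ⟨x, hxX, hxP⟩ := hP.exists_seq_tendsto_sub_apply_zero hX.isComplete hconv hbdd hne hmaps
  obtain ⟨R, hR⟩ := hbdd.subset_closedBall 0
  have hxR : ∀ n, ‖x n‖ ≤ R := fun n => by simpa using hR (hxX n)
  set U := Ultrafilter.of (atTop : Filter ℕ)
  obtain ⟨w, hw⟩ := exists_tendsto_inner_of_norm_le U hxR
  have hxU : ∀ᶠ n in (U : Filter ℕ), x n ∈ X := Eventually.of_forall hxX
  have hwX := hX.mem_of_tendsto_inner hconv hxU hw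
  exact ⟨w, hwX,
    hP.isFixedPt_of_tendsto_inner hxU hxR (hxP.mono_left (Ultrafilter.of_le _)) hwX hw⟩

end Hilbert

/-- Browder's fixed point theorem: a nonexpansive self-map of a nonempty bounded
closed convex subset of a Hilbert space has a fixed point; a strict contraction
has a unique fixed point. -/
theorem stmt_13 {H : Type*} [NormedAddCommGroup H] [InnerProductSpace ℝ H] [CompleteSpace H]
    (X : Set H) (hne : X.Nonempty) (hbdd : Bornology.IsBounded X)
    (hcl : IsClosed X) (hconv : Convex ℝ X)
    (P : H → H) (hmaps : Set.MapsTo P X X)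
    (hnonexp : ∀ u ∈ X, ∀ v ∈ X, ‖P u - P v‖ ≤ ‖u - v‖) :
    (∃ x ∈ X, P x = x) ∧
    ∀ c : ℝ, c < 1 → (∀ u ∈ X, ∀ v ∈ X, ‖P u - P v‖ ≤ c * ‖u - v‖) →
      ∃! x : H, x ∈ X ∧ P x = x := by
  have hP : LipschitzOnWith 1 P X := LipschitzOnWith.of_dist_le_mul fun u hu v hv => by
    simpa [dist_eq_norm] using hnonexp u hu v hv
  have hex : ∃ x ∈ X, P x = x := hP.exists_isFixedPt hne hbdd hcl hconv hmaps
  refine ⟨hex, fun c hc hcontr => existsUnique_of_exists_of_unique hex ?_⟩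
  rintro y₁ y₂ ⟨hy₁, hPy₁⟩ ⟨hy₂, hPy₂⟩
  have h := hcontr y₁ hy₁ y₂ hy₂
  rw [hPy₁, hPy₂] at h
  have : ‖y₁ - y₂‖ ≤ 0 := by nlinarith [norm_nonneg (y₁ - y₂)]
  exact sub_eq_zero.1 (norm_le_zero_iff.1 this)
end
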